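/- arXiv:0907.0032 — 5 statements merged into one kernel-verified Lean document; each statement's English description precedes it below -/
import Mathlib

section
/- Let m ≥ 1 and n ≥ 1 be integers with m ≤ 2n, and let α ≥ 1 be an integer with n − α − m + 1 ≥ 0. Then f_{2n+1}(n+α, n−α−m+1) = (n+α)/(2n−m+1). -/
/-- Auxiliary backward-induction for the truncated Chow–Robbins value.
The first argument is the remaining number of tosses `N - (h + t)`. -/
def crAux : ℕ → ℕ → ℕ → ℕ → ℚ
  | 0, N, h, _t => max (1/2) ((h : ℚ) / (N : ℚ))
  | k+1, N, h, t =>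
      max ((crAux k N (h+1) t + crAux k N h (t+1)) / 2) ((h : ℚ) / ((h : ℚ) + (t : ℚ)))

/-- `cr N h t` is the truncated Chow–Robbins value `f_N(h,t)`:
the optimal expected reward of the coin-tossing game truncated at `N` tosses,
starting with `h` heads and `t` tails. -/
def cr (N h t : ℕ) : ℚ := crAux (N - (h + t)) N h t

/-!
With `h = n + α` heads the player leads by more than the number `m` of remaining tosses
(`2α > 0`), so every reachable position still has at least as many heads as tails. There the
stopping value `h / (h + t)` is at least `1/2`, and one more toss averages to
`(2h + 1) / (2(h + t + 1)) ≤ h / (h + t)`; by backward induction stopping at once is optimal.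
-/

section OrderedField

variable {K : Type*} [Field K] [LinearOrder K] [IsStrictOrderedRing K]

lemma half_le_div_add {a b : K} (hb : 0 ≤ b) (hba : b ≤ a) (ha : 0 < a) :
    1 / 2 ≤ a / (a + b) := by
  rw [div_le_div_iff₀ two_pos (by linarith)]
  linarith

lemma add_div_add_one_le_div {a b : K} (hb : 0 ≤ b) (hba : b ≤ a) (ha : 0 < a) :
    ((a + 1) / (a + 1 + b) + a / (a + (b + 1))) / 2 ≤ a / (a + b) := by
  rw [add_right_comm, ← add_assoc, ← add_div, div_div, div_le_div_iff₀ (by positivity)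
    (by positivity)]
  nlinarith

end OrderedField

lemma crAux_eq_div_of_lt (k : ℕ) : ∀ {N h t : ℕ}, h + t + k = N → t + k < h →
    crAux k N h t = h / (h + t) := by
  induction k with
  | zero =>
    intro N h t hN hlead
    have hpos : (0 : ℚ) < h := by exact_mod_cast (by omega : 0 < h)
    rw [crAux, ← hN, Nat.add_zero, Nat.cast_add]
    exact max_eq_right (half_le_div_add t.cast_nonneg (by exact_mod_cast hlead.le) hpos)
  | succ k ih =>
    intro N h t hN hlead
    have hpos : (0 : ℚ) < h := by exact_mod_cast (by omega : 0 < h)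
    rw [crAux, ih (by omega) (by omega), ih (by omega) (by omega)]
    push_cast
    exact max_eq_right (add_div_add_one_le_div t.cast_nonneg
      (by exact_mod_cast (by omega : t ≤ h)) hpos)

lemma cr_eq_div_of_lt_two_mul {N h t : ℕ} (hN : h + t ≤ N) (hlead : N < 2 * h) :
    cr N h t = h / (h + t) :=
  crAux_eq_div_of_lt _ (by omega) (by omega)

theorem cr_diag_pos_alpha_general (m n : ℕ) (α : ℤ) (hα : 1 ≤ α) (h t : ℕ)
    (hh : (h : ℤ) = (n : ℤ) + α) (ht : (t : ℤ) = (n : ℤ) - α - (m : ℤ) + 1) :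
    cr (2 * n + 1) h t = ((n : ℚ) + (α : ℚ)) / (2 * (n : ℚ) - (m : ℚ) + 1) := by
  have hsum : ((h + t : ℕ) : ℤ) = 2 * n - m + 1 := by push_cast; omega
  rw [cr_eq_div_of_lt_two_mul (by omega) (by omega), ← Nat.cast_add]
  congr 1
  · exact_mod_cast hh
  · exact_mod_cast hsum

theorem cr_diag_pos_alpha (m n : ℕ) (α : ℤ) (hm : 1 ≤ m) (hn : 1 ≤ n)
    (hm2 : m ≤ 2 * n) (hα : 1 ≤ α) (h t : ℕ)
    (hh : (h : ℤ) = (n : ℤ) + α) (ht : (t : ℤ) = (n : ℤ) - α - (m : ℤ) + 1) :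
    cr (2 * n + 1) h t = ((n : ℚ) + (α : ℚ)) / (2 * (n : ℚ) - (m : ℚ) + 1) :=
  cr_diag_pos_alpha_general m n α hα h t hh ht
end

section
/- For every integer n ≥ 1, f_{2n+1}(n, n) = (4n+3)/(8n+4). (This is the case m = 1, α = 0 of the closed form for values just below the top diagonal.) -/
theorem cr_of_add_eq {N h t : ℕ} (hN : h + t = N) :
    cr N h t = max (1 / 2) ((h : ℚ) / N) := by
  rw [cr, hN, Nat.sub_self, crAux]

theorem cr_of_add_lt {N h t : ℕ} (hN : h + t < N) :
    cr N h t = max ((cr N (h + 1) t + cr N h (t + 1)) / 2) ((h : ℚ) / (h + t)) := by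
  obtain ⟨k, hk⟩ : ∃ k, N - (h + t) = k + 1 := ⟨N - (h + t) - 1, by omega⟩
  have hk₁ : N - (h + 1 + t) = k := by omega
  have hk₂ : N - (h + (t + 1)) = k := by omega
  rw [cr, cr, cr, hk, hk₁, hk₂, crAux]

theorem div_add_self_le_half (a : ℚ) : a / (a + a) ≤ 1 / 2 := by
  rcases eq_or_ne a 0 with rfl | ha
  · norm_num
  · rw [← two_mul, div_mul_cancel_right₀ ha, one_div]

theorem cr_m1_a0_general (n : ℕ) :
    cr (2 * n + 1) n n = (4 * (n : ℚ) + 3) / (8 * (n : ℚ) + 4) := by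
  rw [cr_of_add_lt (by omega), cr_of_add_eq (by omega), cr_of_add_eq (by omega)]
  push_cast
  have hpos : (0 : ℚ) < 2 * n + 1 := by positivity
  have heads_ahead : max (1 / 2) (((n : ℚ) + 1) / (2 * n + 1)) = (n + 1) / (2 * n + 1) :=
    max_eq_right (by rw [div_le_div_iff₀ two_pos hpos]; linarith)
  have tails_ahead : max (1 / 2) ((n : ℚ) / (2 * n + 1)) = 1 / 2 :=
    max_eq_left (by rw [div_le_div_iff₀ hpos two_pos]; linarith)
  have continuation : (((n : ℚ) + 1) / (2 * n + 1) + 1 / 2) / 2 = (4 * n + 3) / (8 * n + 4) := by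
    field_simp; ring
  rw [heads_ahead, tails_ahead, continuation]
  refine max_eq_left ((div_add_self_le_half _).trans ?_)
  rw [div_le_div_iff₀ two_pos (by positivity)]
  linarith

theorem cr_m1_a0 (n : ℕ) (hn : 1 ≤ n) :
    cr (2 * n + 1) n n = (4 * (n : ℚ) + 3) / (8 * (n : ℚ) + 4) :=
  cr_m1_a0_general n
end

section
/- For every integer n ≥ 102, f_{2n+1}(n−4, n) = (64n + 33)/(128n + 64). (This is the case m = 5, α = −4 of the closed form for values five steps below the top diagonal.) -/
/-!
Every value is at least `1/2`, so where heads do not outnumber tails stopping is never strictly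
better and the value is the average of its two successors. From `h` heads and `n + 1` tails
with `n - h` tosses left no terminal state has more than `n` heads, so the value there is
exactly `1/2`. Hence, for `N = 2n + 1`, along the line of `n` tails the excess over `1/2`
halves at each step back from the terminal state `(n + 1, n)`, where it is `1/(2(2n + 1))`.
-/

lemma one_half_le_crAux (k N h t : ℕ) : 1 / 2 ≤ crAux k N h t := by
  induction k generalizing h t with
  | zero => exact le_max_left _ _
  | succ k ih =>
    exact le_max_of_le_left (by linarith [ih (h + 1) t, ih h (t + 1)])

lemma crAux_succ_of_le {h t : ℕ} (k N : ℕ) (hht : h ≤ t) :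
    crAux (k + 1) N h t = (crAux k N (h + 1) t + crAux k N h (t + 1)) / 2 := by
  refine max_eq_left ?_
  have hstop : (h : ℚ) / (h + t) ≤ 1 / 2 := by
    rcases Nat.eq_zero_or_pos (h + t) with h0 | hpos
    · simp [show h = 0 by omega]
    · rw [div_le_iff₀ (by exact_mod_cast hpos)]
      have : (h : ℚ) ≤ t := by exact_mod_cast hht
      linarith
  linarith [one_half_le_crAux k N (h + 1) t, one_half_le_crAux k N h (t + 1)]

lemma crAux_eq_one_half {k N h t : ℕ} (hN : h + t + k = N) (hle : 2 * (h + k) ≤ N) :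
    crAux k N h t = 1 / 2 := by
  induction k generalizing h t with
  | zero =>
    refine max_eq_left ?_
    rcases Nat.eq_zero_or_pos N with h0 | hpos
    · simp [h0]
    · rw [div_le_iff₀ (by exact_mod_cast hpos)]
      have : (2 * h : ℚ) ≤ N := by exact_mod_cast (by omega : 2 * h ≤ N)
      linarith
  | succ k ih =>
    rw [crAux_succ_of_le k N (by omega), ih (by omega) (by omega), ih (by omega) (by omega)]
    norm_num

lemma crAux_odd_eq {j h : ℕ} (n : ℕ) (hj : h + j = n + 1) :
    crAux j (2 * n + 1) h n = 1 / 2 + 1 / (2 ^ (j + 1) * (2 * n + 1)) := by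
  induction j generalizing h with
  | zero =>
    obtain rfl : h = n + 1 := by omega
    rw [crAux, max_eq_right]
    · push_cast
      field_simp
      ring
    · rw [le_div_iff₀ (by positivity)]
      push_cast
      linarith
  | succ j ih =>
    rw [crAux_succ_of_le j _ (by omega), ih (by omega),
      crAux_eq_one_half (by omega) (by omega)]
    field_simp
    ring

theorem cr_m5_am4 (n : ℕ) (hn : 102 ≤ n) :
    cr (2 * n + 1) (n - 4) n = (64 * (n : ℚ) + 33) / (128 * (n : ℚ) + 64) := by
  have h5 : 2 * n + 1 - (n - 4 + n) = 5 := by omega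
  rw [cr, h5, crAux_odd_eq n (by omega)]
  field_simp
  ring
end

section
/- For every integer n ≥ 102, f_{2n+1}(n, n−4) = (256n⁵ − 124n⁴ − 340n³ + 91n² + 75n − 6)/(512n⁵ − 1280n⁴ + 640n³ + 320n² − 192n). (This is the case m = 5, α = 0 of the closed form for values five steps below the top diagonal.) -/
theorem crAux_eq_div_of_lt_two_mul {N : ℕ} :
    ∀ {k h t : ℕ}, h + t + k = N → N < 2 * h → crAux k N h t = h / (h + t)
  | 0, h, t, hN, hh => by
    subst hN
    have hpos : (0 : ℚ) < h + t := by exact_mod_cast (by omega : 0 < h + t)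
    rw [crAux, add_zero, max_eq_right] <;> push_cast
    · rfl
    · rw [div_le_div_iff₀ two_pos hpos]
      exact_mod_cast (by omega : 1 * (h + t) ≤ h * 2)
  | k + 1, h, t, hN, hh => by
    have hpos : (0 : ℚ) < h + t := by exact_mod_cast (by omega : 0 < h + t)
    have hth : (t : ℚ) ≤ h := by exact_mod_cast (by omega : t ≤ h)
    rw [crAux, crAux_eq_div_of_lt_two_mul (by omega) (by omega),
      crAux_eq_div_of_lt_two_mul (by omega) hh, max_eq_right]
    push_cast
    rw [div_add_div _ _ (by positivity) (by positivity), div_div,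
      div_le_div_iff₀ (by positivity) hpos]
    nlinarith

/-- The value at `(n, n + 1 - j)` in the game of length `2n + 1` of the strategy that continues
while `h = n` and stops as soon as `h = n + 1`. -/
def contValue (n : ℕ) : ℕ → ℚ
  | 0 => 1 / 2
  | j + 1 => (contValue n j + (n + 1) / (2 * n + 1 - j)) / 2

theorem crAux_eq_contValue {n : ℕ} :
    ∀ {k : ℕ}, k ≤ n + 1 → (∀ i < k, (n : ℚ) / (2 * n - i) ≤ contValue n (i + 1)) →
      crAux k (2 * n + 1) n (n + 1 - k) = contValue n k
  | 0, _, _ => by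
    rw [crAux, max_eq_left]
    · rfl
    · push_cast
      rw [div_le_div_iff₀ (by positivity) two_pos]
      linarith
  | k + 1, hk, hstop => by
    have hcast : ((n + 1 - (k + 1) : ℕ) : ℚ) = n - k := by
      rw [Nat.add_sub_add_right, Nat.cast_sub (by omega)]
    have hcont : ((((n + 1 : ℕ) : ℚ) / ((n + 1 : ℕ) + (n - k))) + contValue n k) / 2
        = contValue n (k + 1) := by
      rw [contValue, add_comm (contValue n k)]
      push_cast
      ring_nf
    rw [crAux, crAux_eq_div_of_lt_two_mul (by omega) (by omega),
      show n + 1 - (k + 1) + 1 = n + 1 - k by omega,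
      crAux_eq_contValue (by omega) (fun i hi => hstop i (by omega)), hcast, hcont, max_eq_left]
    rw [show (n : ℚ) + (n - k) = 2 * n - k by ring]
    exact hstop k (by omega)

theorem div_le_contValue_succ {n i : ℕ} (hn : 102 ≤ n) (hi : i < 5) :
    (n : ℚ) / (2 * n - i) ≤ contValue n (i + 1) := by
  obtain ⟨m, rfl⟩ := Nat.exists_eq_add_of_le hn
  interval_cases i <;> simp only [contValue] <;> push_cast <;> ring_nf
  all_goals
    rw [← sub_nonneg]
    field_simp
    ring_nf
    positivity

theorem contValue_five {n : ℕ} (hn : 2 ≤ n) : contValue n 5 =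
    (256 * (n : ℚ)^5 - 124 * (n : ℚ)^4 - 340 * (n : ℚ)^3 + 91 * (n : ℚ)^2 + 75 * (n : ℚ) - 6) /
      (512 * (n : ℚ)^5 - 1280 * (n : ℚ)^4 + 640 * (n : ℚ)^3 + 320 * (n : ℚ)^2 - 192 * (n : ℚ)) := by
  have hq : (2 : ℚ) ≤ n := by exact_mod_cast hn
  have hden : 512 * (n : ℚ)^5 - 1280 * (n : ℚ)^4 + 640 * (n : ℚ)^3 + 320 * (n : ℚ)^2 - 192 * n
      = 16 * (2 * n + 1) * (2 * n) * (2 * n - 1) * (2 * n - 2) * (2 * n - 3) := by ring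
  have hpos : (0 : ℚ) < 16 * (2 * n + 1) * (2 * n) * (2 * n - 1) * (2 * n - 2) * (2 * n - 3) := by
    have : (0 : ℚ) < 2 * n - 3 := by linarith
    have : (0 : ℚ) < 2 * n - 2 := by linarith
    have : (0 : ℚ) < 2 * n - 1 := by linarith
    positivity
  have h0 : (2 * n + 1 - 0 : ℚ) ≠ 0 := by linarith
  have h1 : (2 * n + 1 - 1 : ℚ) ≠ 0 := by linarith
  have h2 : (2 * n + 1 - 2 : ℚ) ≠ 0 := by linarith
  have h3 : (2 * n + 1 - 3 : ℚ) ≠ 0 := by linarith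
  have h4 : (2 * n + 1 - 4 : ℚ) ≠ 0 := by linarith
  rw [hden, eq_div_iff hpos.ne']
  simp only [contValue]
  push_cast
  field_simp
  ring

theorem cr_m5_a0 (n : ℕ) (hn : 102 ≤ n) :
    cr (2 * n + 1) n (n - 4) =
      (256 * (n : ℚ)^5 - 124 * (n : ℚ)^4 - 340 * (n : ℚ)^3 + 91 * (n : ℚ)^2 + 75 * (n : ℚ) - 6) /
        (512 * (n : ℚ)^5 - 1280 * (n : ℚ)^4 + 640 * (n : ℚ)^3 + 320 * (n : ℚ)^2 - 192 * (n : ℚ)) := by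
  have hsteps : 2 * n + 1 - (n + (n - 4)) = 5 := by omega
  rw [cr, hsteps, show n - 4 = n + 1 - 5 by omega,
    crAux_eq_contValue (by omega) (fun i hi => div_le_contValue_succ hn hi), contValue_five (by omega)]
end

section
/- The cutoff for the position with 2 heads and 1 tail is 51: for every integer N with 3 ≤ N ≤ 50 one has f_N(2,1) = 2/3 (so in the game truncated at N ≤ 50 tosses it is optimal to stop at (2,1)), whereas f_{51}(2,1) > 2/3 (so for horizon N ≥ 51 it is optimal to continue). -/
/-!
The values `f_N` are computed exactly by backward induction. Scaling the row of positions with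
`h + t = N - k` by `2 ^ k * L`, where `L = 2 * N!` is divisible by `2` and by every denominator
`m ≤ N`, makes every entry a natural number: `h / m` becomes `(L / m) * h`, and the average of
the two successors becomes their sum. The kernel then evaluates these integer tables.
-/

open scoped Nat

def scaledRow (N L : ℕ) : ℕ → List ℕ
  | 0 => (List.range (N + 1)).map fun h => max (L / 2) (L / N * h)
  | k + 1 =>
      let p := scaledRow N L k
      (List.range (N - k)).map fun h =>
        max (p.getD (h + 1) 0 + p.getD h 0) (2 ^ (k + 1) * (L / (N - (k + 1)) * h))

lemma getD_range_map {α : Type*} (f : ℕ → α) (d : α) {n i : ℕ} (hi : i < n) :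
    ((List.range n).map f).getD i d = f i := by
  simp [hi]

-- For `m = 0` both sides vanish, thanks to `L / 0 = 0` and `h / 0 = 0`.
lemma natCast_div_mul {L m : ℕ} (h : ℕ) (hm : 0 < m → m ∣ L) :
    ((L / m * h : ℕ) : ℚ) = L * (h / m) := by
  rcases Nat.eq_zero_or_pos m with rfl | hpos
  · simp
  · rw [Nat.cast_mul, Nat.cast_div (hm hpos) (by positivity)]
    ring

lemma scaledRow_zero_getD {N L : ℕ} (hdvd : ∀ m, 0 < m → m ≤ N → m ∣ L) (htwo : 2 ∣ L)
    {h : ℕ} (hh : h ≤ N) :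
    ((scaledRow N L 0).getD h 0 : ℚ) = L * crAux 0 N h (N - h) := by
  rw [scaledRow, getD_range_map _ _ (by omega), crAux, Nat.cast_max,
    natCast_div_mul h fun hN => hdvd N hN le_rfl, Nat.cast_div htwo two_ne_zero,
    mul_max_of_nonneg _ _ (Nat.cast_nonneg L)]
  push_cast
  ring_nf

lemma scaledRow_getD {N L : ℕ} (hdvd : ∀ m, 0 < m → m ≤ N → m ∣ L) (htwo : 2 ∣ L) :
    ∀ {k h t : ℕ}, k ≤ N → h + t = N - k →
      ((scaledRow N L k).getD h 0 : ℚ) = 2 ^ k * L * crAux k N h t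
  | 0, h, t, _, hht => by
    obtain rfl : t = N - h := by omega
    rw [pow_zero, one_mul, scaledRow_zero_getD hdvd htwo (by omega)]
  | k + 1, h, t, hk, hht => by
    have hm : N - (k + 1) = h + t := by omega
    rw [scaledRow, getD_range_map _ _ (by omega), Nat.cast_max, Nat.cast_add,
      scaledRow_getD hdvd htwo (t := t) (by omega) (by omega),
      scaledRow_getD hdvd htwo (t := t + 1) (by omega) (by omega), crAux,
      Nat.cast_mul, hm, natCast_div_mul h fun hpos => hdvd _ hpos (by omega),
      mul_max_of_nonneg _ _ (by positivity)]
    push_cast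
    ring_nf

lemma cr_eq_scaledRow_div {N h t k : ℕ} (hk : h + t + k = N) :
    cr N h t = (scaledRow N (2 * N !) k).getD h 0 / (2 ^ k * (2 * N !)) := by
  rw [eq_div_iff (by positivity), scaledRow_getD (t := t)
    (fun m hm hmN => dvd_mul_of_dvd_right (Nat.dvd_factorial hm hmN) 2) (dvd_mul_right 2 _)
    (by omega) (by omega), cr, show N - (h + t) = k by omega]
  push_cast
  ring

lemma scaledRow_two_one_of_le_fifty : ∀ N, 3 ≤ N → N ≤ 50 →
    (scaledRow N (2 * N !) (N - 3)).getD 2 0 * 3 = 2 * (2 ^ (N - 3) * (2 * N !)) := by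
  decide +kernel

lemma scaledRow_two_one_fifty_one :
    2 * (2 ^ 48 * (2 * 51 !)) < (scaledRow 51 (2 * 51 !) 48).getD 2 0 * 3 := by
  decide +kernel

theorem cutoff_2_1 :
    (∀ N : ℕ, 3 ≤ N → N ≤ 50 → cr N 2 1 = 2 / 3) ∧ 2 / 3 < cr 51 2 1 := by
  constructor
  · intro N hN3 hN50
    rw [cr_eq_scaledRow_div (k := N - 3) (by omega), div_eq_div_iff (by positivity) three_ne_zero]
    exact_mod_cast scaledRow_two_one_of_le_fifty N hN3 hN50
  · rw [cr_eq_scaledRow_div (k := 48) (show 2 + 1 + 48 = 51 from rfl),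
      div_lt_div_iff₀ three_pos (by positivity)]
    exact_mod_cast scaledRow_two_one_fifty_one
end
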